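/- arXiv:1112.4327 — 2 statements merged into one kernel-verified Lean document; each statement's English description precedes it below -/
import Mathlib

section
/- For every j with 1 ≤ j ≤ 2n−1 one has h/24 < a_j < h and b_j < 7/8. -/
/-!
Write `θᵢ = iπ/(2(n+1))`. The numerator of the `i`-th term of `λ̃_j` is
`sin²(inπ/(n+1)) = sin²(2θᵢ) = 4 sin²θᵢ cos²θᵢ`, and `0 < λ_j < 4` for `0 < j < 2n`, so the term
lies between `sin²(2θᵢ)/8` and `cos²θᵢ`. The classical sums `∑ sin²(iπ/(n+1)) = (n+1)/2` and
`∑ cos²θᵢ = n/2` (both from `∑ cos(ia)`, in closed form) then give `1/8 ≤ λ̃_j < n/(n+1)`.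
Finally `a_j = h (1 - λ_j/6) λ̃_j` with `1/3 < 1 - λ_j/6 < 1`, and `b_j < 1 - λ̃_j`.
-/

/-- `λ_j = 4 sin²(jπ/(4n))`. -/
noncomputable def lamRR (n j : ℕ) : ℝ :=
  4 * Real.sin ((j : ℝ) * Real.pi / (4 * (n : ℝ))) ^ 2

/-- `λ̃_j = (2/(n+1)) Σ_{i=1}^n sin²(inπ/(n+1)) / (4 sin²(iπ/(2(n+1))) + λ_j)`. -/
noncomputable def lamTildeRR (n j : ℕ) : ℝ :=
  (2 / ((n : ℝ) + 1)) * ∑ i ∈ Finset.Icc 1 n,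
    Real.sin ((i : ℝ) * (n : ℝ) * Real.pi / ((n : ℝ) + 1)) ^ 2 /
      (4 * Real.sin ((i : ℝ) * Real.pi / (2 * ((n : ℝ) + 1))) ^ 2 + lamRR n j)

/-- `a_j = (h - (h/6)λ_j) λ̃_j` with `h = 1/(2n)`. -/
noncomputable def aRR (n j : ℕ) : ℝ :=
  (1 / (2 * (n : ℝ)) - (1 / (2 * (n : ℝ))) / 6 * lamRR n j) * lamTildeRR n j

/-- `b_j = 1 - (1 + λ_j/2) λ̃_j`. -/
noncomputable def bRR (n j : ℕ) : ℝ :=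
  1 - (1 + lamRR n j / 2) * lamTildeRR n j

open Real Finset

theorem Real.sin_mul_sum_Icc_cos (n : ℕ) (a : ℝ) :
    sin (a / 2) * ∑ i ∈ Icc 1 n, cos (i * a) = sin (n * a / 2) * cos ((n + 1) * a / 2) := by
  have hshift : ∑ i ∈ range n, cos (a * i + a) = ∑ i ∈ Icc 1 n, cos (i * a) := by
    rw [range_eq_Ico, ← Ico_add_one_right_eq_Icc, ← zero_add 1, ← sum_Ico_add']
    exact sum_congr rfl fun i _ => by push_cast; ring_nf
  rw [← hshift, sin_mul_sum_cos]
  ring_nf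

theorem sum_Icc_cos_mul_pi_div (n : ℕ) :
    ∑ i ∈ Icc 1 n, cos (i * (π / (n + 1))) = 0 := by
  have hsin : sin (π / (n + 1) / 2) ≠ 0 := by
    refine (sin_pos_of_pos_of_lt_pi (by positivity) ?_).ne'
    rw [div_div]
    exact div_lt_self pi_pos (by linarith [(Nat.cast_nonneg n : (0 : ℝ) ≤ n)])
  have h := sin_mul_sum_Icc_cos n (π / (n + 1))
  rw [show ((n : ℝ) + 1) * (π / (n + 1)) / 2 = π / 2 by field_simp, cos_pi_div_two,
    mul_zero] at h
  exact (mul_eq_zero.1 h).resolve_left hsin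

theorem sum_Icc_cos_two_mul_pi_div {n : ℕ} (hn : 1 ≤ n) :
    ∑ i ∈ Icc 1 n, cos (i * (2 * π / (n + 1))) = -1 := by
  have hn' : (1 : ℝ) ≤ n := by exact_mod_cast hn
  have hsin : sin (π / (n + 1)) ≠ 0 :=
    (sin_pos_of_pos_of_lt_pi (by positivity) (div_lt_self pi_pos (by linarith))).ne'
  have h := sin_mul_sum_Icc_cos n (2 * π / (n + 1))
  rw [show (n : ℝ) * (2 * π / (n + 1)) / 2 = π - π / (n + 1) by field_simp; ring,
    show ((n : ℝ) + 1) * (2 * π / (n + 1)) / 2 = π by field_simp, sin_pi_sub, cos_pi,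
    show 2 * π / (n + 1) / 2 = π / (n + 1) by ring] at h
  exact mul_left_cancel₀ hsin (by linarith)

theorem sum_Icc_sin_sq_mul_pi_div {n : ℕ} (hn : 1 ≤ n) :
    ∑ i ∈ Icc 1 n, sin (i * π / (n + 1)) ^ 2 = (n + 1) / 2 := by
  have h (i : ℕ) : sin (i * π / (n + 1)) ^ 2 = 1 / 2 - cos (i * (2 * π / (n + 1))) / 2 := by
    rw [sin_sq_eq_half_sub]; ring_nf
  simp only [h, sum_sub_distrib, ← sum_div, sum_Icc_cos_two_mul_pi_div hn, sum_const,
    Nat.card_Icc, nsmul_eq_mul]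
  push_cast
  ring

theorem sum_Icc_cos_sq_mul_pi_div_two (n : ℕ) :
    ∑ i ∈ Icc 1 n, cos (i * π / (2 * (n + 1))) ^ 2 = n / 2 := by
  have h (i : ℕ) : cos (i * π / (2 * (n + 1))) ^ 2 = 1 / 2 + cos (i * (π / (n + 1))) / 2 := by
    rw [cos_sq, show 2 * (i * π / (2 * (n + 1))) = i * (π / (n + 1)) by field_simp]
  simp only [h, sum_add_distrib, ← sum_div, sum_Icc_cos_mul_pi_div, sum_const,
    Nat.card_Icc, nsmul_eq_mul]
  push_cast
  ring

theorem sin_sq_nat_mul_mul_pi_div (i n : ℕ) :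
    sin (i * n * π / (n + 1)) ^ 2 = sin (i * π / (n + 1)) ^ 2 := by
  rw [show (i : ℝ) * n * π / (n + 1) = i * π - i * π / (n + 1) by field_simp; ring,
    sin_nat_mul_pi_sub, neg_sq, mul_pow, ← pow_mul, pow_mul', neg_one_sq, one_pow, one_mul]

theorem sin_two_mul_sq_div_le_cos_sq (θ : ℝ) {μ : ℝ} (hμ : 0 ≤ μ) :
    sin (2 * θ) ^ 2 / (4 * sin θ ^ 2 + μ) ≤ cos θ ^ 2 := by
  rcases (show 0 ≤ 4 * sin θ ^ 2 + μ by positivity).eq_or_lt with hD | hD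
  · rw [← hD, div_zero]
    positivity
  · rw [div_le_iff₀ hD, sin_two_mul]
    nlinarith [mul_nonneg (sq_nonneg (cos θ)) hμ]

theorem lamRR_pos {n j : ℕ} (hj0 : 0 < j) (hj : j < 4 * n) : 0 < lamRR n j := by
  have hn : (0 : ℝ) < n := by exact_mod_cast (show 0 < n by omega)
  have hj' : (j : ℝ) < 4 * n := by exact_mod_cast hj
  have hlt : (j : ℝ) * π / (4 * n) < π := by
    rw [div_lt_iff₀ (by positivity)]
    nlinarith [pi_pos]
  have := sin_pos_of_pos_of_lt_pi (by positivity) hlt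
  unfold lamRR
  positivity

theorem lamRR_lt_four {n j : ℕ} (hj : j < 2 * n) : lamRR n j < 4 := by
  have hn : (0 : ℝ) < n := by exact_mod_cast (show 0 < n by omega)
  have hj' : (j : ℝ) < 2 * n := by exact_mod_cast hj
  have hlt : (j : ℝ) * π / (4 * n) < π / 2 := by
    rw [div_lt_div_iff₀ (by positivity) two_pos]
    nlinarith [pi_pos]
  have hnonneg : 0 ≤ (j : ℝ) * π / (4 * n) := by positivity
  have hcos := cos_pos_of_mem_Ioo ⟨by linarith [pi_pos], hlt⟩
  unfold lamRR
  nlinarith [sin_sq_add_cos_sq ((j : ℝ) * π / (4 * n))]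

theorem lamTildeRR_lt_one (n j : ℕ) : lamTildeRR n j < 1 := by
  have hlam : 0 ≤ lamRR n j := by unfold lamRR; positivity
  have hsum : ∑ i ∈ Icc 1 n, sin (i * n * π / (n + 1)) ^ 2 /
      (4 * sin (i * π / (2 * (n + 1))) ^ 2 + lamRR n j) ≤ (n : ℝ) / 2 := by
    rw [← sum_Icc_cos_sq_mul_pi_div_two n]
    gcongr with i
    rw [sin_sq_nat_mul_mul_pi_div, show (i : ℝ) * π / (n + 1) = 2 * (i * π / (2 * (n + 1))) by
      field_simp]
    exact sin_two_mul_sq_div_le_cos_sq _ hlam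
  calc lamTildeRR n j ≤ 2 / (n + 1) * (n / 2) := by unfold lamTildeRR; gcongr
    _ < 1 := by
      rw [div_mul_div_comm, div_lt_one (by positivity)]
      linarith

theorem one_div_eight_le_lamTildeRR {n j : ℕ} (hn : 1 ≤ n) (hlam : 0 < lamRR n j) :
    1 / 8 ≤ lamTildeRR n j := by
  have hlam4 : lamRR n j ≤ 4 := by
    unfold lamRR; nlinarith [sin_sq_le_one ((j : ℝ) * π / (4 * n))]
  have hsum : ((n : ℝ) + 1) / 16 ≤ ∑ i ∈ Icc 1 n, sin (i * n * π / (n + 1)) ^ 2 /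
      (4 * sin (i * π / (2 * (n + 1))) ^ 2 + lamRR n j) := by
    rw [show ((n : ℝ) + 1) / 16 = (∑ i ∈ Icc 1 n, sin (i * π / (n + 1)) ^ 2) / 8 by
      rw [sum_Icc_sin_sq_mul_pi_div hn]; ring, sum_div]
    simp only [sin_sq_nat_mul_mul_pi_div]
    gcongr with i
    nlinarith [sin_sq_le_one (i * π / (2 * (n + 1)))]
  calc (1 : ℝ) / 8 = 2 / (n + 1) * ((n + 1) / 16) := by field_simp; norm_num
    _ ≤ lamTildeRR n j := by unfold lamTildeRR; gcongr

/-- for every `1 ≤ j ≤ 2n-1` (with `h = 1/(2n)`),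
`h/24 < a_j < h` and `b_j < 7/8`. -/
theorem a_b_bounds (n : ℕ) (hn : 1 ≤ n) (h : ℝ) (hh : h = 1 / (2 * (n : ℝ)))
    (j : ℕ) (hj1 : 1 ≤ j) (hj2 : j ≤ 2 * n - 1) :
    h / 24 < aRR n j ∧ aRR n j < h ∧ bRR n j < 7 / 8 := by
  have hlam0 : 0 < lamRR n j := lamRR_pos hj1 (by omega)
  have hlam4 : lamRR n j < 4 := lamRR_lt_four (by omega)
  have hmu1 : lamTildeRR n j < 1 := lamTildeRR_lt_one n j
  have hmu8 : 1 / 8 ≤ lamTildeRR n j := one_div_eight_le_lamTildeRR hn hlam0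
  have hh0 : 0 < h := by rw [hh]; positivity
  have ha : aRR n j = h * ((1 - lamRR n j / 6) * lamTildeRR n j) := by rw [aRR, hh]; ring
  have ha_lower : 1 / 24 < (1 - lamRR n j / 6) * lamTildeRR n j := by nlinarith
  have ha_upper : (1 - lamRR n j / 6) * lamTildeRR n j < 1 := by nlinarith
  refine ⟨?_, ?_, ?_⟩
  · rw [ha]; nlinarith
  · rw [ha]; nlinarith
  · rw [bRR]; nlinarith
end

section
/- Under Assumptions (A1) and (A2), define the Robin–Robin reduction matrix R = θ·I − (1−θ)·T, where T = (S₂ − γ₁I)(γ₂I + S₂)⁻¹(γ₂I − S₁)(γ₁I + S₁)⁻¹ and the relaxation parameter is chosen as θ = (2t − 1)/(2t + 1). Then every complex eigenvalue μ of R is real and satisfies |μ| ≤ (2t − 1)/(2t + 1); that is, the spectrum of R is contained in [−(2t−1)/(2t+1), (2t−1)/(2t+1)], a bound independent of the matrices' dimension. -/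
/-!
Write `c = γ₁ + γ₂`. Then `T = A * B` with `A = I - c (γ₂I + S₂)⁻¹` positive semidefinite
(because `γ₁ I ≤ S₂`) and `B = c (γ₁I + S₁)⁻¹ - I` positive definite with
`B⁻¹ = c (γ₂I - S₁)⁻¹ - I` (because `S₁ < γ₂ I`). If `A B v = τ v`, pairing with `w = B v` gives
`⟨A w, w⟩ = τ ⟨B v, v⟩` and `⟨B⁻¹ w, w⟩ = ⟨B v, v⟩`, so `0 ≤ A ≤ r B⁻¹` puts every complex
eigenvalue `τ` of `T` in the real interval `[0, r]`. The bound `A ≤ (2t - 1) B⁻¹` comes from (A1)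
and the Cauchy–Schwarz inequality `|v|⁴ ≤ ⟨P v, v⟩ ⟨P⁻¹ v, v⟩` applied to `P = γ₂I - S₁` and
`P = γ₂I + S₂`. Finally `θ - (1 - θ) [0, 2t - 1] = [-θ, θ]` for `θ = (2t - 1)/(2t + 1)`.
-/

open Matrix
open scoped ComplexOrder MatrixOrder

namespace Matrix

variable {n : Type*} [Fintype n]

lemma IsHermitian.dotProduct_mulVec_comm {P : Matrix n n ℝ} (hP : P.IsHermitian) (x y : n → ℝ) :
    x ⬝ᵥ (P *ᵥ y) = (P *ᵥ x) ⬝ᵥ y := by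
  rw [dotProduct_mulVec, ← vecMul_transpose, ← conjTranspose_eq_transpose_of_trivial, hP.eq]

lemma map_ofReal_mul (A B : Matrix n n ℝ) :
    (A * B).map Complex.ofReal = A.map Complex.ofReal * B.map Complex.ofReal :=
  Matrix.map_mul (f := Complex.ofRealHom)

omit [Fintype n] in
lemma conjTranspose_map_ofReal (A : Matrix n n ℝ) :
    (A.map Complex.ofReal)ᴴ = Aᴴ.map Complex.ofReal :=
  (conjTranspose_map _ fun x ↦ (Complex.conj_ofReal x).symm).symm

lemma PosSemidef.map_ofReal {P : Matrix n n ℝ} (hP : P.PosSemidef) :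
    (P.map Complex.ofReal).PosSemidef := by
  classical
  obtain ⟨C, rfl⟩ := CStarAlgebra.nonneg_iff_eq_star_mul_self.mp hP.nonneg
  rw [star_eq_conjTranspose, map_ofReal_mul, ← conjTranspose_map_ofReal]
  exact posSemidef_conjTranspose_mul_self _

lemma PosDef.map_ofReal {P : Matrix n n ℝ} (hP : P.PosDef) : (P.map Complex.ofReal).PosDef := by
  classical
  rw [hP.posSemidef.map_ofReal.posDef_iff_det_ne_zero]
  change (Complex.ofRealHom.mapMatrix P).det ≠ 0
  rw [← RingHom.map_det]
  exact Complex.ofReal_ne_zero.mpr hP.det_pos.ne'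

variable [DecidableEq n]

lemma IsHermitian.posSemidef_sub_smul_one {S : Matrix n n ℝ} (hS : S.IsHermitian) {m : ℝ}
    (h : ∀ i, m ≤ hS.eigenvalues i) : (S - m • 1).PosSemidef := by
  rw [← nonneg_iff_posSemidef, sub_nonneg, ← Algebra.algebraMap_eq_smul_one,
    algebraMap_le_iff_le_spectrum hS.isSelfAdjoint, hS.spectrum_real_eq_range_eigenvalues]
  rintro _ ⟨i, rfl⟩
  exact h i

lemma IsHermitian.posSemidef_smul_one_sub {S : Matrix n n ℝ} (hS : S.IsHermitian) {m : ℝ}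
    (h : ∀ i, hS.eigenvalues i ≤ m) : (m • 1 - S).PosSemidef := by
  rw [← nonneg_iff_posSemidef, sub_nonneg, ← Algebra.algebraMap_eq_smul_one,
    le_algebraMap_iff_spectrum_le hS.isSelfAdjoint, hS.spectrum_real_eq_range_eigenvalues]
  rintro _ ⟨i, rfl⟩
  exact h i

lemma PosDef.mulVec_inv_mulVec {P : Matrix n n ℝ} (hP : P.PosDef) (v : n → ℝ) :
    P *ᵥ (P⁻¹ *ᵥ v) = v := by
  rw [mulVec_mulVec, mul_nonsing_inv _ ((isUnit_iff_isUnit_det P).mp hP.isUnit), one_mulVec]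

lemma PosDef.sq_dotProduct_le {P : Matrix n n ℝ} (hP : P.PosDef) (v : n → ℝ) :
    (v ⬝ᵥ v) ^ 2 ≤ (v ⬝ᵥ (P *ᵥ v)) * (v ⬝ᵥ (P⁻¹ *ᵥ v)) := by
  set w := P⁻¹ *ᵥ v
  have hPw : P *ᵥ w = v := hP.mulVec_inv_mulVec v
  have hquad : ∀ r : ℝ, 0 ≤ (v ⬝ᵥ w) * (r * r) + (-2 * (v ⬝ᵥ v)) * r + v ⬝ᵥ (P *ᵥ v) := by
    intro r
    have := hP.posSemidef.dotProduct_mulVec_nonneg (v - r • w)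
    simp only [star_trivial, mulVec_sub, mulVec_smul, hPw, dotProduct_sub, sub_dotProduct,
      dotProduct_smul, smul_dotProduct, smul_eq_mul] at this
    rw [hP.isHermitian.dotProduct_mulVec_comm w v, hPw, dotProduct_comm w v] at this
    linarith
  have := discrim_le_zero hquad
  rw [discrim] at this
  nlinarith

lemma posSemidef_one_sub_smul_inv {M : Matrix n n ℝ} {c : ℝ} (hc : 0 ≤ c) (hM : M.PosDef)
    (hMc : (M - c • 1).PosSemidef) : (1 - c • M⁻¹).PosSemidef := by
  refine .of_dotProduct_mulVec_nonneg
    (isHermitian_one.sub (hM.inv.isHermitian.smul (.all c))) fun v ↦ ?_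
  set w := M⁻¹ *ᵥ v
  have hv : v = (M - c • 1) *ᵥ w + c • w := by
    rw [sub_mulVec, hM.mulVec_inv_mulVec, smul_mulVec, one_mulVec, sub_add_cancel]
  have hAv : (1 - c • M⁻¹) *ᵥ v = (M - c • 1) *ᵥ w := by
    rw [sub_mulVec, one_mulVec, smul_mulVec, sub_mulVec, hM.mulVec_inv_mulVec, smul_mulVec,
      one_mulVec]
  have hPw := hMc.dotProduct_mulVec_nonneg w
  rw [star_trivial] at hPw ⊢
  rw [hAv]
  nth_rewrite 1 [hv]
  rw [add_dotProduct, smul_dotProduct, smul_eq_mul]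
  exact add_nonneg (by simpa using dotProduct_star_self_nonneg ((M - c • 1) *ᵥ w))
    (mul_nonneg hc hPw)

lemma posDef_smul_inv_sub_one {K : Matrix n n ℝ} {c : ℝ} (hK : K.PosDef)
    (hcK : (c • 1 - K).PosDef) : (c • K⁻¹ - 1).PosDef := by
  refine .of_dotProduct_mulVec_pos
    ((hK.inv.isHermitian.smul (.all c)).sub isHermitian_one) fun v hv ↦ ?_
  have hcs := hK.sq_dotProduct_le v
  have hKv := hK.dotProduct_mulVec_pos hv
  have hcKv := hcK.dotProduct_mulVec_pos hv
  have hvv : 0 < v ⬝ᵥ v := by simpa using dotProduct_star_self_pos_iff.mpr hv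
  simp only [star_trivial, sub_mulVec, smul_mulVec, one_mulVec, dotProduct_sub,
    dotProduct_smul, smul_eq_mul] at hKv hcKv ⊢
  have hc : 0 < c := by nlinarith
  have : 0 < (c * (v ⬝ᵥ (K⁻¹ *ᵥ v)) - v ⬝ᵥ v) * (v ⬝ᵥ (K *ᵥ v)) := by
    nlinarith [mul_pos hvv hcKv, mul_le_mul_of_nonneg_left hcs hc.le]
  exact pos_of_mul_pos_left this hKv.le

lemma mem_Icc_of_mem_spectrum_map_ofReal_mul {A B : Matrix n n ℝ} {r : ℝ} (hA : A.PosSemidef)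
    (hB : B.PosDef) (hAB : (r • B⁻¹ - A).PosSemidef) {τ : ℂ}
    (hτ : τ ∈ spectrum ℂ ((A * B).map Complex.ofReal)) : τ ∈ Set.Icc 0 (r : ℂ) := by
  rw [← spectrum_toLin', ← Module.End.hasEigenvalue_iff_mem_spectrum] at hτ
  obtain ⟨v, hv⟩ := hτ.exists_hasEigenvector
  set w := B.map Complex.ofReal *ᵥ v
  have hAw : A.map Complex.ofReal *ᵥ w = τ • v := by
    simpa [w, map_ofReal_mul, mulVec_mulVec] using hv.apply_eq_smul
  have hBw : (B⁻¹).map Complex.ofReal *ᵥ w = v := by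
    rw [mulVec_mulVec, ← map_ofReal_mul,
      nonsing_inv_mul _ ((isUnit_iff_isUnit_det B).mp hB.isUnit),
      Matrix.map_one _ Complex.ofReal_zero Complex.ofReal_one, one_mulVec]
  set β := star v ⬝ᵥ w
  have hβ : 0 < β := hB.map_ofReal.dotProduct_mulVec_pos hv.2
  have hwv : star w ⬝ᵥ v = β := by
    rw [star_mulVec, ← dotProduct_mulVec, conjTranspose_map_ofReal, hB.isHermitian.eq]
  have hlow : 0 ≤ τ * β := by
    simpa [hAw, hwv] using hA.map_ofReal.dotProduct_mulVec_nonneg w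
  have hup : 0 ≤ (r - τ) * β := by
    have hmap : (r • B⁻¹ - A).map Complex.ofReal =
        (r : ℂ) • (B⁻¹).map Complex.ofReal - A.map Complex.ofReal := by
      ext i j; simp
    have := hAB.map_ofReal.dotProduct_mulVec_nonneg w
    rwa [hmap, sub_mulVec, smul_mulVec, hAw, hBw, dotProduct_sub, dotProduct_smul,
      dotProduct_smul, hwv, smul_eq_mul, smul_eq_mul, ← sub_mul] at this
  have hβinv : 0 ≤ β⁻¹ := (inv_pos.mpr hβ).le
  constructor
  · simpa [hβ.ne'] using mul_nonneg hlow hβinv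
  · simpa [hβ.ne'] using mul_nonneg hup hβinv

lemma exists_eq_sub_mul_of_mem_spectrum {T : Matrix n n ℝ} {θ : ℝ} (hθ : θ ≠ 1) {μ : ℂ}
    (hμ : μ ∈ spectrum ℂ ((θ • (1 : Matrix n n ℝ) - (1 - θ) • T).map Complex.ofReal)) :
    ∃ τ ∈ spectrum ℂ (T.map Complex.ofReal), μ = θ - (1 - θ) * τ := by
  have hmap : (θ • (1 : Matrix n n ℝ) - (1 - θ) • T).map Complex.ofReal =
      algebraMap ℂ _ (θ : ℂ) - ((1 - θ : ℝ) : ℂ) • T.map Complex.ofReal := by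
    ext i j
    by_cases h : i = j <;> simp [h, algebraMap_matrix_apply]
  have hc : ((1 - θ : ℝ) : ℂ) ≠ 0 := Complex.ofReal_ne_zero.mpr (sub_ne_zero.mpr hθ.symm)
  rw [hmap, ← Units.val_mk0 hc, ← Units.smul_def, ← spectrum.singleton_sub_eq,
    spectrum.unit_smul_eq_smul] at hμ
  obtain ⟨_, rfl, _, ⟨τ, hτ, rfl⟩, rfl⟩ := hμ
  exact ⟨τ, hτ, by simp⟩

end Matrix

section RobinRobin

variable {n : Type*} [Fintype n] [DecidableEq n] {S1 S2 : Matrix n n ℝ} {γ1 γ2 t : ℝ}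

lemma posSemidef_robinRobin_bound (hS1 : S1.PosSemidef) (hS2 : S2.PosSemidef) (hγ1 : 0 ≤ γ1)
    (hγ2 : 0 < γ2) (hG : (γ2 • 1 - S1).PosDef) (ht : 1 ≤ t)
    (hS21 : ∀ v, (S2 *ᵥ v) ⬝ᵥ v ≤ t * ((S1 *ᵥ v) ⬝ᵥ v)) :
    ((2 * t - 1) • ((γ1 + γ2) • (γ2 • 1 - S1)⁻¹ - 1) -
      (1 - (γ1 + γ2) • (γ2 • 1 + S2)⁻¹)).PosSemidef := by
  have hM : (γ2 • 1 + S2).PosDef := (PosDef.one.smul hγ2).add_posSemidef hS2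
  refine .of_dotProduct_mulVec_nonneg
    ((((hG.inv.isHermitian.smul (.all _)).sub isHermitian_one).smul (.all _)).sub
      (isHermitian_one.sub (hM.inv.isHermitian.smul (.all _)))) fun v ↦ ?_
  rcases eq_or_ne v 0 with rfl | hv
  · simp
  set x := v ⬝ᵥ v
  set a := v ⬝ᵥ (S1 *ᵥ v)
  set b := v ⬝ᵥ (S2 *ᵥ v)
  set g := v ⬝ᵥ ((γ2 • 1 - S1)⁻¹ *ᵥ v)
  set m := v ⬝ᵥ ((γ2 • 1 + S2)⁻¹ *ᵥ v)
  have ha : 0 ≤ a := by simpa using hS1.dotProduct_mulVec_nonneg v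
  have hba : b ≤ t * a := by simpa [a, b, dotProduct_comm v] using hS21 v
  have hGv : 0 < γ2 * x - a := by
    simpa [sub_mulVec, smul_mulVec] using hG.dotProduct_mulVec_pos hv
  have hg : x ^ 2 ≤ (γ2 * x - a) * g := by
    simpa [sub_mulVec, smul_mulVec] using hG.sq_dotProduct_le v
  have hm : x ^ 2 ≤ (γ2 * x + b) * m := by
    simpa [add_mulVec, smul_mulVec] using hM.sq_dotProduct_le v
  have hga : a ≤ γ2 * ((γ1 + γ2) * g - x) := by
    have : 0 ≤ (γ2 * x - a) * (γ2 * ((γ1 + γ2) * g - x) - a) := by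
      nlinarith [mul_le_mul_of_nonneg_left hg (by positivity : 0 ≤ γ2 * (γ1 + γ2)),
        mul_nonneg (mul_nonneg hγ1 hγ2.le) (sq_nonneg x), sq_nonneg a]
    exact sub_nonneg.mp ((mul_nonneg_iff_of_pos_left hGv).mp this)
  have hmb : γ2 * (x - (γ1 + γ2) * m) ≤ b := by
    have hb : 0 ≤ b := by simpa using hS2.dotProduct_mulVec_nonneg v
    have hx : 0 < x := by simpa using dotProduct_star_self_pos_iff.mpr hv
    have : 0 ≤ (γ2 * x + b) * (b - γ2 * (x - (γ1 + γ2) * m)) := by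
      nlinarith [mul_le_mul_of_nonneg_left hm (by positivity : 0 ≤ γ2 * (γ1 + γ2)),
        mul_nonneg (mul_nonneg hγ1 hγ2.le) (sq_nonneg x), sq_nonneg b]
    exact sub_nonneg.mp ((mul_nonneg_iff_of_pos_left (by positivity)).mp this)
  have key : 0 ≤ (2 * t - 1) * ((γ1 + γ2) * g - x) - (x - (γ1 + γ2) * m) := by
    refine (mul_nonneg_iff_of_pos_left hγ2).mp ?_
    nlinarith [mul_le_mul_of_nonneg_left hga (by linarith : (0 : ℝ) ≤ 2 * t - 1),
      mul_nonneg (by linarith : (0 : ℝ) ≤ t - 1) ha]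
  simp only [star_trivial, sub_mulVec, smul_mulVec, one_mulVec, dotProduct_sub,
    dotProduct_smul, smul_eq_mul]
  linarith

lemma mem_Icc_of_mem_spectrum_robinRobin (hS1 : S1.PosSemidef) (hS2 : S2.PosSemidef)
    (hγ1 : 0 < γ1) (hγ2 : 0 < γ2) (hS2γ1 : (S2 - γ1 • 1).PosSemidef) (hG : (γ2 • 1 - S1).PosDef)
    (ht : 1 ≤ t)
    (hS21 : ∀ v, (S2 *ᵥ v) ⬝ᵥ v ≤ t * ((S1 *ᵥ v) ⬝ᵥ v)) {τ : ℂ}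
    (hτ : τ ∈ spectrum ℂ (((S2 - γ1 • 1) * (γ2 • 1 + S2)⁻¹ * (γ2 • 1 - S1) *
      (γ1 • 1 + S1)⁻¹).map Complex.ofReal)) :
    τ ∈ Set.Icc 0 ((2 * t - 1 : ℝ) : ℂ) := by
  set c := γ1 + γ2
  have hK : (γ1 • 1 + S1).PosDef := (PosDef.one.smul hγ1).add_posSemidef hS1
  have hM : (γ2 • 1 + S2).PosDef := (PosDef.one.smul hγ2).add_posSemidef hS2
  have hKc : γ1 • 1 + S1 = c • 1 - (γ2 • 1 - S1) := by module
  have hGc : γ2 • 1 - S1 = c • 1 - (γ1 • 1 + S1) := by module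
  have hMc : S2 - γ1 • 1 = γ2 • 1 + S2 - c • 1 := by module
  have hKdet := (isUnit_iff_isUnit_det _).mp hK.isUnit
  have hMdet := (isUnit_iff_isUnit_det _).mp hM.isUnit
  have hGdet := (isUnit_iff_isUnit_det _).mp hG.isUnit
  have hA : (S2 - γ1 • 1) * (γ2 • 1 + S2)⁻¹ = 1 - c • (γ2 • 1 + S2)⁻¹ := by
    rw [hMc, sub_mul, mul_nonsing_inv _ hMdet, smul_mul, one_mul]
  have hB : (γ2 • 1 - S1) * (γ1 • 1 + S1)⁻¹ = c • (γ1 • 1 + S1)⁻¹ - 1 := by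
    rw [hGc, sub_mul, mul_nonsing_inv _ hKdet, smul_mul, one_mul]
  have hBinv : (c • (γ1 • 1 + S1)⁻¹ - 1)⁻¹ = c • (γ2 • 1 - S1)⁻¹ - 1 := by
    rw [← hB, Matrix.mul_inv_rev, nonsing_inv_nonsing_inv _ hKdet, hKc, sub_mul,
      mul_nonsing_inv _ hGdet, smul_mul, one_mul]
  rw [mul_assoc _ (γ2 • 1 - S1), hA, hB] at hτ
  refine mem_Icc_of_mem_spectrum_map_ofReal_mul
    (posSemidef_one_sub_smul_inv (by positivity) hM (hMc ▸ hS2γ1))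
    (posDef_smul_inv_sub_one hK (hGc ▸ hG)) ?_ hτ
  rw [hBinv]
  exact posSemidef_robinRobin_bound hS1 hS2 hγ1.le hγ2 hG ht hS21

end RobinRobin

lemma im_eq_zero_and_norm_le_of_mem_Icc {t θ : ℝ} (ht : 1 ≤ t)
    (hθ : θ = (2 * t - 1) / (2 * t + 1)) {τ : ℂ} (hτ : τ ∈ Set.Icc 0 ((2 * t - 1 : ℝ) : ℂ)) :
    ((θ : ℂ) - (1 - θ) * τ).im = 0 ∧ ‖(θ : ℂ) - (1 - θ) * τ‖ ≤ θ := by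
  obtain ⟨x, rfl⟩ : ∃ x : ℝ, τ = x :=
    ⟨τ.re, Complex.eq_re_of_ofReal_le (Complex.ofReal_zero ▸ hτ.1)⟩
  rw [Set.mem_Icc, Complex.zero_le_real, Complex.real_le_real] at hτ
  have hθ2 : (1 - θ) * (2 * t - 1) = 2 * θ := by
    rw [hθ]; field_simp; ring
  have hθ1 : 0 ≤ 1 - θ := by
    rw [hθ, sub_nonneg, div_le_one (by linarith)]; linarith
  have hμ : (θ : ℂ) - (1 - θ) * x = ((θ - (1 - θ) * x : ℝ) : ℂ) := by push_cast; ring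
  rw [hμ, Complex.ofReal_im, Complex.norm_real, Real.norm_eq_abs, abs_le]
  refine ⟨rfl, ?_, ?_⟩ <;> nlinarith [mul_le_mul_of_nonneg_left hτ.2 hθ1, mul_nonneg hθ1 hτ.1]

theorem reduction_matrix_spectrum_general (N : ℕ)
    (S1 S2 : Matrix (Fin N) (Fin N) ℝ) (hS1 : S1.PosDef) (hS2 : S2.PosDef)
    (lmin1 lmax1 lmin2 lmax2 : ℝ)
    (hlmax1 : IsGreatest (Set.range hS1.isHermitian.eigenvalues) lmax1)
    (hlmin2 : IsLeast (Set.range hS2.isHermitian.eigenvalues) lmin2)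
    (s t : ℝ) (ht : 1 ≤ t)
    (hA1 : ∀ v : Fin N → ℝ,
      s * ((S1 *ᵥ v) ⬝ᵥ v) ≤ (S2 *ᵥ v) ⬝ᵥ v ∧ (S2 *ᵥ v) ⬝ᵥ v ≤ t * ((S1 *ᵥ v) ⬝ᵥ v))
    (γ1 γ2 : ℝ) (hγ1 : 0 < γ1) (hγ1' : γ1 ≤ min lmin1 lmin2)
    (hγ2 : 3 * max lmax1 lmax2 ≤ γ2)
    (θ : ℝ) (hθ : θ = (2 * t - 1) / (2 * t + 1))
    (T R : Matrix (Fin N) (Fin N) ℝ)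
    (hT : T = (S2 - γ1 • (1 : Matrix (Fin N) (Fin N) ℝ)) *
      (γ2 • (1 : Matrix (Fin N) (Fin N) ℝ) + S2)⁻¹ *
      (γ2 • (1 : Matrix (Fin N) (Fin N) ℝ) - S1) *
      (γ1 • (1 : Matrix (Fin N) (Fin N) ℝ) + S1)⁻¹)
    (hR : R = θ • (1 : Matrix (Fin N) (Fin N) ℝ) - (1 - θ) • T) :
    ∀ μ : ℂ, μ ∈ spectrum ℂ (R.map (Complex.ofReal)) →
      μ.im = 0 ∧ ‖μ‖ ≤ (2 * t - 1) / (2 * t + 1) := by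
  intro μ hμ
  have hlmax1_pos : 0 < lmax1 := by
    obtain ⟨i, hi⟩ := hlmax1.1
    exact hi ▸ hS1.eigenvalues_pos i
  have hlmax1_lt : lmax1 < γ2 := by linarith [le_max_left lmax1 lmax2]
  have hS2γ1 : (S2 - γ1 • 1).PosSemidef := hS2.isHermitian.posSemidef_sub_smul_one fun i ↦
    (hγ1'.trans (min_le_right _ _)).trans (hlmin2.2 ⟨i, rfl⟩)
  have hG : (γ2 • 1 - S1).PosDef := by
    have := (PosDef.one.smul (sub_pos.mpr hlmax1_lt)).add_posSemidef
      (hS1.isHermitian.posSemidef_smul_one_sub fun i ↦ hlmax1.2 ⟨i, rfl⟩)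
    rwa [sub_smul, sub_add_sub_cancel] at this
  have hθ1 : θ ≠ 1 := by
    rw [hθ, ne_eq, div_eq_one_iff_eq (by linarith)]; linarith
  obtain ⟨τ, hτ, rfl⟩ := exists_eq_sub_mul_of_mem_spectrum hθ1 (hR ▸ hμ)
  rw [← hθ]
  exact im_eq_zero_and_norm_le_of_mem_Icc ht hθ <| mem_Icc_of_mem_spectrum_robinRobin
    hS1.posSemidef hS2.posSemidef hγ1 (by linarith) hS2γ1 hG ht (fun v ↦ (hA1 v).2) (hT ▸ hτ)

/-- under Assumptions (A1) and (A2), the Robin–Robin reduction matrix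
`R = θI - (1-θ)T` with `T = (S₂ - γ₁I)(γ₂I + S₂)⁻¹(γ₂I - S₁)(γ₁I + S₁)⁻¹` and
`θ = (2t - 1)/(2t + 1)` has only real eigenvalues, all of absolute value at most
`(2t - 1)/(2t + 1)`, a bound independent of the dimension `N`. -/
theorem reduction_matrix_spectrum (N : ℕ) (hN : 1 ≤ N)
    (S1 S2 : Matrix (Fin N) (Fin N) ℝ) (hS1 : S1.PosDef) (hS2 : S2.PosDef)
    (lmin1 lmax1 lmin2 lmax2 : ℝ)
    (hlmin1 : IsLeast (Set.range hS1.isHermitian.eigenvalues) lmin1)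
    (hlmax1 : IsGreatest (Set.range hS1.isHermitian.eigenvalues) lmax1)
    (hlmin2 : IsLeast (Set.range hS2.isHermitian.eigenvalues) lmin2)
    (hlmax2 : IsGreatest (Set.range hS2.isHermitian.eigenvalues) lmax2)
    (s t : ℝ) (hs : 0 < s) (hs1 : s ≤ 1) (ht : 1 ≤ t)
    (hA1 : ∀ v : Fin N → ℝ,
      s * ((S1 *ᵥ v) ⬝ᵥ v) ≤ (S2 *ᵥ v) ⬝ᵥ v ∧ (S2 *ᵥ v) ⬝ᵥ v ≤ t * ((S1 *ᵥ v) ⬝ᵥ v))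
    (γ1 γ2 : ℝ) (hγ1 : 0 < γ1) (hγ1' : γ1 ≤ min lmin1 lmin2)
    (hγ2 : 3 * max lmax1 lmax2 ≤ γ2)
    (θ : ℝ) (hθ : θ = (2 * t - 1) / (2 * t + 1))
    (T R : Matrix (Fin N) (Fin N) ℝ)
    (hT : T = (S2 - γ1 • (1 : Matrix (Fin N) (Fin N) ℝ)) *
      (γ2 • (1 : Matrix (Fin N) (Fin N) ℝ) + S2)⁻¹ *
      (γ2 • (1 : Matrix (Fin N) (Fin N) ℝ) - S1) *
      (γ1 • (1 : Matrix (Fin N) (Fin N) ℝ) + S1)⁻¹)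
    (hR : R = θ • (1 : Matrix (Fin N) (Fin N) ℝ) - (1 - θ) • T) :
    ∀ μ : ℂ, μ ∈ spectrum ℂ (R.map (Complex.ofReal)) →
      μ.im = 0 ∧ ‖μ‖ ≤ (2 * t - 1) / (2 * t + 1) :=
  reduction_matrix_spectrum_general N S1 S2 hS1 hS2 lmin1 lmax1 lmin2 lmax2 hlmax1 hlmin2 s t ht hA1
    γ1 γ2 hγ1 hγ1' hγ2 θ hθ T R hT hR
end
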